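/- arXiv:1307.3667 — 8 statements merged into one kernel-verified Lean document; each statement's English description precedes it below -/
import Mathlib

section
/- Let A be an MTL-chain and let ∘ : A → A be a map. Then ∘ satisfies (c1) if x ∧ ¬x ≠ 0 then ∘(x)=0, (c2) ∘(0)=∘(1)=1, and (c3) if ¬x=0 and x ≤ y then ∘(x) ≤ ∘(y), if and only if ∘ satisfies the quasi-identities: (∘1) x ∧ ¬x ∧ ∘(x) = 0 for all x; (∘2) ∘(0)=∘(1)=1; and (∘3) for all x,y,z, if (¬¬x ∧ (x→y)) ∨ z = 1 then (∘(x)→∘(y)) ∨ z = 1. -/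
open scoped Classical

/-- An MTL-chain: a linearly ordered, commutative, bounded, integral
residuated lattice ⟨A, ∧, ∨, &, →, 0, 1⟩, where ∧/∨ are min/max,
`zer` is the bottom element 0, the monoid unit 1 is the top element,
and `himp` is the residuum of the monoid operation. -/
class MTLChain (A : Type*) extends LinearOrder A, CommMonoid A where
  zer : A
  zer_le : ∀ x : A, zer ≤ x
  le_one : ∀ x : A, x ≤ 1
  himp : A → A → A
  mul_le_iff : ∀ x y z : A, x * y ≤ z ↔ x ≤ himp y z

namespace MTLChain

variable {A : Type*} [MTLChain A]

/-- Negation ¬x = x → 0. -/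
def neg (x : A) : A := himp x zer

end MTLChain

open MTLChain

/-! In a chain, `a ∨ b = 1` iff `a = 1` or `b = 1`, `a ∧ b = 0` iff `a = 0` or `b = 0`, and
`a → b = 1` iff `a ≤ b`; moreover `¬¬x = 1` iff `¬x = 0`. Read through these facts, the
quasi-identity (∘3) says `(¬x = 0 ∧ x ≤ y) ∨ z = 1 ⇒ ∘x ≤ ∘y ∨ z = 1`, which is (c3) once `z` is
taken to be `0`, and (∘1) says `x ∧ ¬x = 0 ∨ ∘x = 0`, which is (c1). -/

namespace MTLChain

variable {A : Type*} [MTLChain A]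

lemma le_zer_iff {a : A} : a ≤ zer ↔ a = zer :=
  ⟨fun h => le_antisymm h (zer_le a), fun h => h.le⟩

lemma himp_eq_one_iff {a b : A} : himp a b = 1 ↔ a ≤ b := by
  rw [← (le_one _).ge_iff_eq, ← mul_le_iff, one_mul]

lemma neg_neg_eq_one_iff {x : A} : neg (neg x) = 1 ↔ neg x = zer := by
  rw [neg, himp_eq_one_iff, le_zer_iff]

lemma min_eq_zer_iff {a b : A} : min a b = zer ↔ a = zer ∨ b = zer := by
  simp only [← le_zer_iff, min_le_iff]

lemma max_eq_one_iff {a b : A} : max a b = 1 ↔ a = 1 ∨ b = 1 := by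
  simp only [← (le_one _).ge_iff_eq, le_max_iff]

lemma min_eq_one_iff {a b : A} : min a b = 1 ↔ a = 1 ∧ b = 1 := by
  simp only [← (le_one _).ge_iff_eq, le_min_iff]

lemma le_of_zer_eq_one (h : (zer : A) = 1) (a b : A) : a ≤ b :=
  (le_one a).trans (h ▸ zer_le b)

variable (o : A → A)

lemma forall_eq_zer_of_min_neg_ne_zer_iff :
    (∀ x : A, min x (neg x) ≠ zer → o x = zer) ↔ ∀ x : A, min (min x (neg x)) (o x) = zer := by
  simp only [min_eq_zer_iff (a := min _ _), or_iff_not_imp_left]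

lemma forall_le_of_neg_eq_zer_iff :
    (∀ x y : A, neg x = zer → x ≤ y → o x ≤ o y) ↔
      ∀ x y z : A, max (min (neg (neg x)) (himp x y)) z = 1 → max (himp (o x) (o y)) z = 1 := by
  simp only [max_eq_one_iff, min_eq_one_iff, neg_neg_eq_one_iff, himp_eq_one_iff]
  constructor
  · rintro hmono x y z (⟨hnx, hxy⟩ | hz)
    exacts [Or.inl (hmono x y hnx hxy), Or.inr hz]
  · intro h x y hnx hxy
    rcases h x y zer (Or.inl ⟨hnx, hxy⟩) with hle | htriv
    exacts [hle, le_of_zer_eq_one htriv _ _]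

end MTLChain

theorem stmt1 {A : Type*} [MTLChain A] (o : A → A) :
    ((∀ x : A, min x (neg x) ≠ zer → o x = zer) ∧
     (o (zer : A) = 1 ∧ o (1 : A) = 1) ∧
     (∀ x y : A, neg x = zer → x ≤ y → o x ≤ o y))
    ↔
    ((∀ x : A, min (min x (neg x)) (o x) = zer) ∧
     (o (zer : A) = 1 ∧ o (1 : A) = 1) ∧
     (∀ x y z : A, max (min (neg (neg x)) (himp x y)) z = 1 →
        max (himp (o x) (o y)) z = 1)) :=
  and_congr (forall_eq_zer_of_min_neg_ne_zer_iff o)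
    (and_congr Iff.rfl (forall_le_of_neg_eq_zer_iff o))
end

section
/- Let A be an MTL-chain with a consistency operator ∘ satisfying (c1)-(c3). Then for all x, y ∈ A, ∘(x) ∧ ∘(y) ≤ ∘(x → y). -/
open scoped Classical

open MTLChain

/-!
For `x ≤ y` the implication is `1`. Otherwise `o x = 0` or `o y = 0` unless both `x` and
`y` are `0` or have negation `0`; as `y < x`, `x` is not `0`, so `¬x = 0`. Then either `y = 0` and
`x → y = ¬x = 0`, or `¬y = 0` and (c3) applies to `y ≤ x → y`.
-/

namespace MTLChain

variable {A : Type*} [MTLChain A]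

lemma one_le_himp_of_le {x y : A} (h : x ≤ y) : 1 ≤ himp x y :=
  (mul_le_iff 1 x y).mp ((one_mul x).trans_le h)

lemma himp_eq_one_of_le {x y : A} (h : x ≤ y) : himp x y = 1 :=
  le_antisymm (le_one _) (one_le_himp_of_le h)

lemma mul_le_right (x y : A) : x * y ≤ y :=
  (mul_le_iff x y y).mpr ((le_one x).trans (one_le_himp_of_le le_rfl))

lemma le_himp_self (x y : A) : y ≤ himp x y :=
  (mul_le_iff y x y).mp ((mul_comm y x).trans_le (mul_le_right x y))

lemma eq_zer_or_eq_zer_of_min_eq_zer {x y : A} (h : min x y = zer) : x = zer ∨ y = zer :=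
  (min_choice x y).imp (fun hx => hx.symm.trans h) (fun hy => hy.symm.trans h)

end MTLChain

theorem stmt4 {A : Type*} [MTLChain A] (o : A → A)
    (hc1 : ∀ x : A, min x (neg x) ≠ zer → o x = zer)
    (hc2 : o (zer : A) = 1 ∧ o (1 : A) = 1)
    (hc3 : ∀ x y : A, neg x = zer → x ≤ y → o x ≤ o y) :
    ∀ x y : A, min (o x) (o y) ≤ o (himp x y) := by
  intro x y
  rcases le_or_gt x y with hxy | hyx
  · rw [himp_eq_one_of_le hxy, hc2.2]
    exact le_one _
  by_cases hx : min x (neg x) = zer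
  swap
  · rw [hc1 x hx]
    exact (min_le_left _ _).trans (zer_le _)
  by_cases hy : min y (neg y) = zer
  swap
  · rw [hc1 y hy]
    exact (min_le_right _ _).trans (zer_le _)
  have hnx : neg x = zer :=
    (eq_zer_or_eq_zer_of_min_eq_zer hx).resolve_left fun h => hyx.not_ge (h ▸ zer_le y)
  rcases eq_zer_or_eq_zer_of_min_eq_zer hy with rfl | hny
  · rw [show himp x zer = zer from hnx, hc2.1]
    exact le_one _
  · exact (min_le_right _ _).trans (hc3 y _ hny (le_himp_self x y))
end

section
/- Let A be an MTL-chain and ∘ : A → A a consistency operator satisfying (c1)-(c3) whose image is contained in {0,1}, and suppose ∘(x)=1 whenever ¬x=0. Then for all x, y ∈ A, ∘(x) ∧ ∘(y) ≤ ∘(x & y), where & is the monoidal product. -/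
/-! Since `x ∧ ¬x` is `x` or `¬x` in a chain, (c1) leaves three cases for each argument:
`∘x = 0`, `x = 0`, or `¬x = 0`. The first makes the meet `0`, the second makes `x & y = 0`
with `∘0 = 1`, and if `¬x = ¬y = 0` then `¬(x & y) = x → ¬y = 0`, so `∘(x & y) = 1`. -/

open scoped Classical

namespace MTLChain

variable {A : Type*} [MTLChain A]

theorem zer_mul (x : A) : zer * x = zer :=
  le_antisymm ((mul_le_iff _ _ _).mpr (zer_le _)) (zer_le _)

theorem mul_zer (x : A) : x * zer = zer := by
  rw [mul_comm, zer_mul]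

theorem neg_mul_eq_himp_neg (x y : A) : neg (x * y) = himp x (neg y) :=
  eq_of_forall_le_iff fun z => by simp only [neg, ← mul_le_iff, mul_assoc]

theorem neg_mul_eq_zer {x y : A} (hx : neg x = zer) (hy : neg y = zer) :
    neg (x * y) = zer := by
  rw [neg_mul_eq_himp_neg, hy]
  exact hx

theorem eq_zer_or_eq_zer_or_neg_eq_zer {o : A → A}
    (hc1 : ∀ x : A, min x (neg x) ≠ zer → o x = zer) (x : A) :
    o x = zer ∨ x = zer ∨ neg x = zer := by
  by_cases h : min x (neg x) = zer
  · rcases min_choice x (neg x) with hm | hm <;> rw [hm] at h <;> simp only [h, true_or, or_true]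
  · exact Or.inl (hc1 x h)

end MTLChain

open MTLChain

theorem stmt5_general {A : Type*} [MTLChain A] (o : A → A)
    (hc1 : ∀ x : A, min x (neg x) ≠ zer → o x = zer)
    (hc2 : o (zer : A) = 1 ∧ o (1 : A) = 1)
    (hmax : ∀ x : A, neg x = zer → o x = 1) :
    ∀ x y : A, min (o x) (o y) ≤ o (x * y) := by
  intro x y
  have ge_of_eq_one : o (x * y) = 1 → min (o x) (o y) ≤ o (x * y) :=
    fun h => h ▸ le_one _
  rcases eq_zer_or_eq_zer_or_neg_eq_zer hc1 x with hox | hx | hx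
  · exact (min_le_left _ _).trans (hox ▸ zer_le _)
  · exact ge_of_eq_one (by rw [hx, zer_mul, hc2.1])
  rcases eq_zer_or_eq_zer_or_neg_eq_zer hc1 y with hoy | hy | hy
  · exact (min_le_right _ _).trans (hoy ▸ zer_le _)
  · exact ge_of_eq_one (by rw [hy, mul_zer, hc2.1])
  · exact ge_of_eq_one (hmax _ (neg_mul_eq_zer hx hy))

theorem stmt5 {A : Type*} [MTLChain A] (o : A → A)
    (hc1 : ∀ x : A, min x (neg x) ≠ zer → o x = zer)
    (hc2 : o (zer : A) = 1 ∧ o (1 : A) = 1)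
    (hc3 : ∀ x y : A, neg x = zer → x ≤ y → o x ≤ o y)
    (hcrisp : ∀ x : A, o x = zer ∨ o x = 1)
    (hmax : ∀ x : A, neg x = zer → o x = 1) :
    ∀ x y : A, min (o x) (o y) ≤ o (x * y) :=
  stmt5_general o hc1 hc2 hmax
end

section
/- Let A be an MTL-chain with a consistency operator ∘ satisfying (c1)-(c3), and suppose additionally that ∘ satisfies the 'minimality' equation x ∨ ¬x ∨ ¬∘(x) = 1 for all x. Then ∘ is completely determined: ∘(x) = 1 if x ∈ {0,1} and ∘(x) = 0 otherwise. -/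
/-! If `x ∉ {0, 1}` and `¬x ≠ 0`, then `x ∧ ¬x ≠ 0` in a chain, so (c1) gives `∘(x) = 0`.
If `¬x = 0`, the minimality equation `x ∨ ¬x ∨ ¬∘(x) = 1` forces `¬∘(x) = 1`, since a join in a
chain is one of its arguments; and `¬y = 1` only for `y = 0`. -/

open scoped Classical

open MTLChain

lemma eq_or_eq_of_max_eq {α : Type*} [LinearOrder α] {a b c : α} (h : max a b = c) :
    a = c ∨ b = c :=
  (max_choice a b).imp (fun e => e.symm.trans h) (fun e => e.symm.trans h)

lemma min_ne_of_ne_of_ne {α : Type*} [LinearOrder α] {a b c : α} (ha : a ≠ c) (hb : b ≠ c) :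
    min a b ≠ c := by
  rcases min_choice a b with e | e <;> rwa [e]

namespace MTLChain

variable {A : Type*} [MTLChain A]

lemma zer_ne_one_of_ne_zer {x : A} (hx : x ≠ zer) : (zer : A) ≠ 1 := fun h =>
  hx (le_antisymm (h ▸ le_one x) (zer_le x))

lemma neg_eq_one_iff {x : A} : neg x = 1 ↔ x = zer := by
  rw [← (le_one (neg x)).ge_iff_eq, neg, ← mul_le_iff, one_mul, (zer_le x).ge_iff_eq']

end MTLChain

theorem stmt7_general {A : Type*} [MTLChain A] (o : A → A)
    (hc1 : ∀ x : A, min x (neg x) ≠ zer → o x = zer)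
    (hc2 : o (zer : A) = 1 ∧ o (1 : A) = 1)
    (hmin : ∀ x : A, max (max x (neg x)) (neg (o x)) = 1) :
    ∀ x : A, ((x = zer ∨ x = 1) → o x = 1) ∧ (¬(x = zer ∨ x = 1) → o x = zer) := by
  intro x
  refine ⟨by rintro (rfl | rfl); exacts [hc2.1, hc2.2], fun hx => ?_⟩
  obtain ⟨hx0, hx1⟩ := not_or.mp hx
  by_cases hnx : neg x = zer
  · rcases eq_or_eq_of_max_eq (hmin x) with hmax | hox
    · rcases eq_or_eq_of_max_eq hmax with hx_one | hnx_one
      · exact absurd hx_one hx1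
      · exact absurd (hnx ▸ hnx_one) (zer_ne_one_of_ne_zer hx0)
    · exact neg_eq_one_iff.mp hox
  · exact hc1 x (min_ne_of_ne_of_ne hx0 hnx)

theorem stmt7 {A : Type*} [MTLChain A] (o : A → A)
    (hc1 : ∀ x : A, min x (neg x) ≠ zer → o x = zer)
    (hc2 : o (zer : A) = 1 ∧ o (1 : A) = 1)
    (hc3 : ∀ x y : A, neg x = zer → x ≤ y → o x ≤ o y)
    (hmin : ∀ x : A, max (max x (neg x)) (neg (o x)) = 1) :
    ∀ x : A, ((x = zer ∨ x = 1) → o x = 1) ∧ (¬(x = zer ∨ x = 1) → o x = zer) :=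
  stmt7_general o hc1 hc2 hmin
end

section
/- Let A be an MTL-chain with Monteiro–Baaz Delta operator Δ (defined on a chain by Δ(x)=1 if x=1, Δ(x)=0 otherwise), in which moreover ¬x=0 implies x=1. Define ∘(x) = Δ(x ∨ ¬x). Then ∘ satisfies (c1)-(c3), and conversely Δ(x) = ∘(x) ∧ x for all x. -/
open scoped Classical

namespace MTLChain

variable {A : Type*} [MTLChain A]

lemma eq_one_of_one_le {x : A} (h : 1 ≤ x) : x = 1 :=
  le_antisymm (le_one x) h

lemma eq_zer_of_le_zer {x : A} (h : x ≤ zer) : x = zer :=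
  le_antisymm h (zer_le x)

lemma neg_one : neg (1 : A) = zer :=
  eq_zer_of_le_zer <| by simpa using (mul_le_iff (neg (1 : A)) 1 zer).mpr le_rfl

lemma neg_zer : neg (zer : A) = 1 :=
  eq_one_of_one_le <| (mul_le_iff 1 zer zer).mp (by rw [one_mul])

lemma eq_zer_of_neg_eq_one {x : A} (h : neg x = 1) : x = zer :=
  eq_zer_of_le_zer <| by simpa using (mul_le_iff 1 x zer).mpr h.ge

lemma max_neg_eq_one_iff {x : A} : max x (neg x) = 1 ↔ x = 1 ∨ x = zer := by
  constructor
  · intro h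
    rcases max_choice x (neg x) with hx | hx <;> rw [hx] at h
    · exact Or.inl h
    · exact Or.inr (eq_zer_of_neg_eq_one h)
  · rintro (rfl | rfl)
    · rw [neg_one, max_eq_left (zer_le 1)]
    · rw [neg_zer, max_eq_right (zer_le 1)]

lemma min_neg_eq_zer_of_eq_one_or_eq_zer {x : A} (hx : x = 1 ∨ x = zer) :
    min x (neg x) = zer := by
  rcases hx with rfl | rfl
  · rw [neg_one, min_eq_right (zer_le 1)]
  · exact min_eq_left (zer_le _)

/-- The Monteiro–Baaz operator Δ of a chain. -/
def delta (x : A) : A := if x = 1 then 1 else zer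

/-- The consistency operator ∘. -/
def circ (x : A) : A := delta (max x (neg x))

lemma circ_eq_zer_of_min_neg_ne_zer {x : A} (hx : min x (neg x) ≠ zer) : circ x = zer :=
  if_neg <| mt max_neg_eq_one_iff.mp <| mt min_neg_eq_zer_of_eq_one_or_eq_zer hx

lemma circ_of_eq_one_or_eq_zer {x : A} (hx : x = 1 ∨ x = zer) : circ x = 1 :=
  if_pos <| max_neg_eq_one_iff.mpr hx

lemma circ_le_circ_of_neg_eq_zer (hN : ∀ x : A, neg x = zer → x = 1) {x y : A}
    (hx : neg x = zer) (hxy : x ≤ y) : circ x ≤ circ y := by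
  obtain rfl := hN x hx
  rw [eq_one_of_one_le hxy]

lemma delta_eq_min_circ_self (x : A) : delta x = min (circ x) x := by
  by_cases h1 : x = 1
  · rw [circ_of_eq_one_or_eq_zer (Or.inl h1), h1, min_self]
    exact if_pos rfl
  · rw [delta, if_neg h1]
    by_cases h0 : x = zer
    · rw [h0, min_eq_right (zer_le _)]
    · rw [circ, delta, if_neg (fun h => (max_neg_eq_one_iff.mp h).elim h1 h0),
        min_eq_left (zer_le _)]

end MTLChain

open MTLChain

theorem stmt12 {A : Type*} [MTLChain A]
    (hN : ∀ x : A, neg x = zer → x = 1) :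
    let delta : A → A := fun x => if x = 1 then 1 else zer
    let o : A → A := fun x => delta (max x (neg x))
    ((∀ x : A, min x (neg x) ≠ zer → o x = zer) ∧
     (o (zer : A) = 1 ∧ o (1 : A) = 1) ∧
     (∀ x y : A, neg x = zer → x ≤ y → o x ≤ o y)) ∧
    (∀ x : A, delta x = min (o x) x) :=
  ⟨⟨fun _ => circ_eq_zer_of_min_neg_ne_zer,
    ⟨circ_of_eq_one_or_eq_zer (Or.inr rfl), circ_of_eq_one_or_eq_zer (Or.inl rfl)⟩,
    fun _ _ => circ_le_circ_of_neg_eq_zer hN⟩,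
   delta_eq_min_circ_self⟩
end

section
/- Let * be a left-continuous t-norm on [0,1] with residuum ⇒ (x ⇒ y = sup{z : z * x ≤ y}) and negation n(x) = x ⇒ 0. If n is involutive (n(n(x)) = x for all x), then the unique map ∘ : [0,1] → [0,1] satisfying (c1)-(c3) is: ∘(x)=1 for x ∈ {0,1} and ∘(x)=0 otherwise. -/
open scoped Classical

/-!
The residuum of a t-norm at `0` is the negation `n x = x ⇒ 0`. Since `1 * 0 = 0`, every
`z ∈ [0,1]` satisfies `z * 0 ≤ 0`, so `n 0 = 1`; involutivity then gives `n x = 0 ↔ x = 1`.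
Hence (c1) forces `∘ x = 0` on `(0,1)`, (c2) fixes the endpoints, and (c3) only speaks about
`x = y = 1`.
-/

open Set

section Negation

variable {n : ℝ → ℝ}

theorem eq_zero_iff_eq_one_of_involutive (hinv : ∀ x ∈ Icc (0:ℝ) 1, n (n x) = x)
    (hn0 : n 0 = 1) {x : ℝ} (hx : x ∈ Icc (0:ℝ) 1) : n x = 0 ↔ x = 1 := by
  constructor
  · intro h
    rw [← hinv x hx, h, hn0]
  · rintro rfl
    rw [← hn0, hinv 0 (left_mem_Icc.2 zero_le_one)]

theorem pos_min_iff_of_involutive (hinv : ∀ x ∈ Icc (0:ℝ) 1, n (n x) = x)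
    (hn0 : n 0 = 1) (hn_nonneg : ∀ x, 0 ≤ n x) {x : ℝ} (hx : x ∈ Icc (0:ℝ) 1) :
    0 < min x (n x) ↔ ¬(x = 0 ∨ x = 1) := by
  rw [lt_min_iff, ← eq_zero_iff_eq_one_of_involutive hinv hn0 hx, not_or,
    hx.1.lt_iff_ne', (hn_nonneg x).lt_iff_ne']

theorem consistency_conditions_iff_of_involutive (hinv : ∀ x ∈ Icc (0:ℝ) 1, n (n x) = x)
    (hn0 : n 0 = 1) (hn_nonneg : ∀ x, 0 ≤ n x) (o : ℝ → ℝ) :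
    ((∀ x ∈ Icc (0:ℝ) 1, 0 < min x (n x) → o x = 0) ∧ (o 0 = 1 ∧ o 1 = 1) ∧
      (∀ x ∈ Icc (0:ℝ) 1, ∀ y ∈ Icc (0:ℝ) 1, n x = 0 → x ≤ y → o x ≤ o y)) ↔
      ∀ x ∈ Icc (0:ℝ) 1, o x = if x = 0 ∨ x = 1 then 1 else 0 := by
  have hmin := fun x (hx : x ∈ Icc (0:ℝ) 1) => pos_min_iff_of_involutive hinv hn0 hn_nonneg hx
  constructor
  · rintro ⟨hc1, ⟨ho0, ho1⟩, -⟩ x hx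
    split_ifs with hends
    · rcases hends with rfl | rfl
      exacts [ho0, ho1]
    · exact hc1 x hx ((hmin x hx).2 hends)
  · intro ho
    refine ⟨fun x hx hpos => ?_, ⟨?_, ?_⟩, fun x hx y hy hnx hxy => ?_⟩
    · rw [ho x hx, if_neg ((hmin x hx).1 hpos)]
    · simp [ho 0 (left_mem_Icc.2 zero_le_one)]
    · simp [ho 1 (right_mem_Icc.2 zero_le_one)]
    · obtain rfl := (eq_zero_iff_eq_one_of_involutive hinv hn0 hx).1 hnx
      rw [le_antisymm hy.2 hxy]

end Negation

section Residuum

variable {star : ℝ → ℝ → ℝ}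

theorem residuum_nonneg (x y : ℝ) : 0 ≤ sSup {z | z ∈ Icc (0:ℝ) 1 ∧ star z x ≤ y} :=
  Real.sSup_nonneg fun _ hz => hz.1.1

theorem residuum_eq_one_of_le {x y : ℝ} (h : star 1 x ≤ y) :
    sSup {z | z ∈ Icc (0:ℝ) 1 ∧ star z x ≤ y} = 1 :=
  IsGreatest.csSup_eq ⟨⟨right_mem_Icc.2 zero_le_one, h⟩, fun _ hz => hz.1.2⟩

end Residuum

theorem stmt14_general
    (star : ℝ → ℝ → ℝ)
    (hcomm : ∀ x y, star x y = star y x)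
    (hunit : ∀ x ∈ Set.Icc (0:ℝ) 1, star x 1 = x)
    (res : ℝ → ℝ → ℝ)
    (hres : ∀ x y, res x y = sSup {z | z ∈ Set.Icc (0:ℝ) 1 ∧ star z x ≤ y})
    (hinv : ∀ x ∈ Set.Icc (0:ℝ) 1, res (res x 0) 0 = x)
    (o : ℝ → ℝ) :
    ((∀ x ∈ Set.Icc (0:ℝ) 1, 0 < min x (res x 0) → o x = 0) ∧
     (o 0 = 1 ∧ o 1 = 1) ∧
     (∀ x ∈ Set.Icc (0:ℝ) 1, ∀ y ∈ Set.Icc (0:ℝ) 1,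
        res x 0 = 0 → x ≤ y → o x ≤ o y))
    ↔ (∀ x ∈ Set.Icc (0:ℝ) 1, o x = if x = 0 ∨ x = 1 then 1 else 0) := by
  have hstar10 : star 1 0 ≤ 0 := by
    rw [hcomm, hunit 0 (left_mem_Icc.2 zero_le_one)]
  have hres00 : res 0 0 = 1 := by
    rw [hres, residuum_eq_one_of_le hstar10]
  exact consistency_conditions_iff_of_involutive (n := fun x => res x 0) hinv hres00
    (fun x => (hres x 0).symm ▸ residuum_nonneg x 0) o

/-- A left-continuous t-norm `star` on [0,1], with residuum `res` given by the
sup-formula, and involutive negation n(x) = res x 0: the unique consistency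
operator (satisfying (c1)-(c3)) is 1 on {0,1} and 0 elsewhere. -/
theorem stmt14
    (star : ℝ → ℝ → ℝ)
    (hmaps : ∀ x ∈ Set.Icc (0:ℝ) 1, ∀ y ∈ Set.Icc (0:ℝ) 1,
      star x y ∈ Set.Icc (0:ℝ) 1)
    (hcomm : ∀ x y, star x y = star y x)
    (hassoc : ∀ x y z, star (star x y) z = star x (star y z))
    (hmono : ∀ x y z, x ∈ Set.Icc (0:ℝ) 1 → y ∈ Set.Icc (0:ℝ) 1 →
      z ∈ Set.Icc (0:ℝ) 1 → x ≤ y → star x z ≤ star y z)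
    (hunit : ∀ x ∈ Set.Icc (0:ℝ) 1, star x 1 = x)
    (hlc : ∀ x ∈ Set.Icc (0:ℝ) 1, ∀ y ∈ Set.Icc (0:ℝ) 1,
      ContinuousWithinAt (fun t => star t y) (Set.Iio x) x)
    (res : ℝ → ℝ → ℝ)
    (hres : ∀ x y, res x y = sSup {z | z ∈ Set.Icc (0:ℝ) 1 ∧ star z x ≤ y})
    (hinv : ∀ x ∈ Set.Icc (0:ℝ) 1, res (res x 0) 0 = x)
    (o : ℝ → ℝ) :
    ((∀ x ∈ Set.Icc (0:ℝ) 1, 0 < min x (res x 0) → o x = 0) ∧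
     (o 0 = 1 ∧ o 1 = 1) ∧
     (∀ x ∈ Set.Icc (0:ℝ) 1, ∀ y ∈ Set.Icc (0:ℝ) 1,
        res x 0 = 0 → x ≤ y → o x ≤ o y))
    ↔ (∀ x ∈ Set.Icc (0:ℝ) 1, o x = if x = 0 ∨ x = 1 then 1 else 0) :=
  stmt14_general star hcomm hunit res hres hinv o
end

section
/- Let A be a BL-chain (an MTL-chain additionally satisfying divisibility x ∧ y = x & (x → y)) and let ∘ be a consistency operator on A satisfying (c1)-(c3). Then ∘ satisfies the axiom (¬¬x → x) ∨ ∘(x) = 1 for all x if and only if ∘(x) = 1 whenever ¬x = 0 (i.e., ∘ is the maximal consistency operator). -/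
open scoped Classical

open MTLChain

/-- A BL-chain: an MTL-chain additionally satisfying divisibility
x ∧ y = x & (x → y). -/
class BLChain (A : Type*) extends MTLChain A where
  div : ∀ x y : A, min x y = x * himp x y

section Helpers

variable {A : Type*} [MTLChain A]

lemma MTL.le_himp_iff (x y z : A) : x ≤ MTLChain.himp y z ↔ x * y ≤ z :=
  (MTLChain.mul_le_iff x y z).symm

lemma MTL.himp_mul_le (y z : A) : MTLChain.himp y z * y ≤ z :=
  (MTL.le_himp_iff _ _ _).mp le_rfl

lemma MTL.neg_def (x : A) : neg x = MTLChain.himp x zer := rfl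

lemma MTL.mul_le_mul_left' {u v : A} (h : u ≤ v) (c : A) : c * u ≤ c * v := by
  have h1 : v ≤ MTLChain.himp c (c * v) := (MTL.le_himp_iff _ _ _).mpr (by rw [mul_comm])
  have h2 := (MTL.le_himp_iff _ _ _).mp (le_trans h h1)
  rwa [mul_comm] at h2

lemma MTL.mul_le_mul_right' {u v : A} (h : u ≤ v) (c : A) : u * c ≤ v * c := by
  rw [mul_comm u c, mul_comm v c]; exact MTL.mul_le_mul_left' h c

lemma MTL.neg_zer : neg (zer : A) = 1 := by
  apply le_antisymm (MTLChain.le_one _)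
  rw [MTL.neg_def]
  exact (MTL.le_himp_iff _ _ _).mpr (by rw [one_mul])

lemma MTL.himp_one (x : A) : MTLChain.himp 1 x = x := by
  apply le_antisymm
  · have h := MTL.himp_mul_le (1 : A) x
    rwa [mul_one] at h
  · exact (MTL.le_himp_iff _ _ _).mpr (by rw [mul_one])

lemma MTL.le_neg_neg (x : A) : x ≤ neg (neg x) := by
  rw [MTL.neg_def (neg x)]
  refine (MTL.le_himp_iff _ _ _).mpr ?_
  rw [mul_comm, MTL.neg_def]
  exact MTL.himp_mul_le _ _

lemma MTL.neg_antitone {u v : A} (h : u ≤ v) : neg v ≤ neg u := by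
  rw [MTL.neg_def u]
  refine (MTL.le_himp_iff _ _ _).mpr ?_
  calc neg v * u ≤ neg v * v := MTL.mul_le_mul_left' h _
    _ ≤ zer := by rw [MTL.neg_def]; exact MTL.himp_mul_le _ _

lemma MTL.neg_neg_neg (x : A) : neg (neg (neg x)) = neg x :=
  le_antisymm (MTL.neg_antitone (MTL.le_neg_neg x)) (MTL.le_neg_neg (neg x))

lemma MTL.neg_mul_self (u : A) : neg u * u ≤ zer := by
  rw [MTL.neg_def]; exact MTL.himp_mul_le _ _

lemma MTL.neg_mul (u v : A) : neg (u * v) = MTLChain.himp v (neg u) := by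
  apply le_antisymm
  · refine (MTL.le_himp_iff _ _ _).mpr ?_
    rw [MTL.neg_def u]
    refine (MTL.le_himp_iff _ _ _).mpr ?_
    have h : neg (u * v) * v * u = neg (u * v) * (u * v) := by
      rw [mul_assoc, mul_comm v u]
    rw [h]
    exact MTL.neg_mul_self (u * v)
  · rw [MTL.neg_def (u * v)]
    refine (MTL.le_himp_iff _ _ _).mpr ?_
    have h1 : MTLChain.himp v (neg u) * v ≤ neg u := MTL.himp_mul_le _ _
    have h2 : MTLChain.himp v (neg u) * (u * v) = MTLChain.himp v (neg u) * v * u := by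
      rw [mul_assoc, mul_comm u v]
    rw [h2]
    calc MTLChain.himp v (neg u) * v * u ≤ neg u * u := MTL.mul_le_mul_right' h1 u
      _ ≤ zer := MTL.neg_mul_self u

lemma MTL.le_zer_eq {x : A} (h : x ≤ zer) : x = zer :=
  le_antisymm h (MTLChain.zer_le x)

end Helpers

section BLHelpers

variable {A : Type*} [BLChain A]

lemma BL.div_of_le {x y : A} (h : x ≤ y) : x = y * MTLChain.himp y x := by
  have hd := BLChain.div y x
  rwa [min_eq_right h] at hd

/-- Key structural lemma: in a BL-chain, if x > 0 and ¬x > 0 then ¬¬x ≤ x. -/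
lemma BL.negneg_le {x : A} (hx : x ≠ zer) (hn0 : neg x ≠ zer) :
    neg (neg x) ≤ x := by
  obtain ⟨n, hn⟩ : ∃ n : A, n = neg x := ⟨_, rfl⟩
  obtain ⟨a, ha⟩ : ∃ a : A, a = neg n := ⟨_, rfl⟩
  rw [← hn, ← ha]
  by_contra hlt'
  have hxa : x < a := by
    rcases lt_or_ge x a with h | h
    · exact h
    · exact absurd h hlt'
  have hna : neg a = n := by rw [ha, hn, MTL.neg_neg_neg]
  obtain ⟨t, ht⟩ : ∃ t : A, t = MTLChain.himp a x := ⟨_, rfl⟩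
  have hxat : x = a * t := by rw [ht]; exact BL.div_of_le hxa.le
  have hn_t : n = MTLChain.himp t n := by
    have h0 : neg (a * t) = MTLChain.himp t n := by rw [MTL.neg_mul, hna]
    have h0' : neg x = MTLChain.himp t n := by rw [hxat]; exact h0
    conv_lhs => rw [hn]
    exact h0'
  -- n < t
  have hnt : n < t := by
    rcases lt_or_ge n t with h | h
    · exact h
    · exfalso
      have h1 : (1 : A) ≤ MTLChain.himp t n :=
        (MTL.le_himp_iff _ _ _).mpr (by rw [one_mul]; exact h)
      have hn1 : n = 1 := le_antisymm (MTLChain.le_one n) (hn_t ▸ h1)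
      have h2 : (1 : A) ≤ MTLChain.himp x zer := by
        rw [← MTL.neg_def, ← hn, hn1]
      have h3 := (MTL.le_himp_iff _ _ _).mp h2
      rw [one_mul] at h3
      exact hx (MTL.le_zer_eq h3)
  -- t * n = n
  have htn : t * n = n := by
    have h1 : n = t * MTLChain.himp t n := BL.div_of_le hnt.le
    rw [← hn_t] at h1
    exact h1.symm
  -- n ≤ ¬t is impossible
  have hnegt : ¬ (n ≤ neg t) := by
    intro h
    have h1 : t * n ≤ t * neg t := MTL.mul_le_mul_left' h t
    have h2 : t * neg t ≤ zer := by rw [mul_comm]; exact MTL.neg_mul_self t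
    rw [htn] at h1
    exact hn0 (hn ▸ MTL.le_zer_eq (h1.trans h2))
  rcases lt_or_ge t a with hta | hat
  · -- case t < a
    obtain ⟨p, hp⟩ : ∃ p : A, p = MTLChain.himp a t := ⟨_, rfl⟩
    have h1 : t = a * p := by rw [hp]; exact BL.div_of_le hta.le
    have h2 : neg t = MTLChain.himp p n := by
      conv_lhs => rw [h1]
      rw [MTL.neg_mul, hna]
    have h3 : n ≤ neg t := by
      rw [h2]
      refine (MTL.le_himp_iff _ _ _).mpr ?_
      calc n * p ≤ n * 1 := MTL.mul_le_mul_left' (MTLChain.le_one p) n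
        _ = n := mul_one n
    exact hnegt h3
  · -- case a ≤ t
    obtain ⟨r, hr⟩ : ∃ r : A, r = MTLChain.himp t a := ⟨_, rfl⟩
    have h1 : a = t * r := by rw [hr]; exact BL.div_of_le hat
    have h2 : n = MTLChain.himp r (neg t) := by
      have h0 : neg (t * r) = MTLChain.himp r (neg t) := MTL.neg_mul t r
      rw [← h1, hna] at h0
      exact h0
    have h3 : n * r ≤ neg t := by
      rw [h2]; exact MTL.himp_mul_le r (neg t)
    have h4 : n * r * t ≤ zer :=
      calc n * r * t ≤ neg t * t := MTL.mul_le_mul_right' h3 t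
        _ ≤ zer := MTL.neg_mul_self t
    have h5 : n * r = zer := by
      have hac : n * r * t = n * r := by
        rw [mul_comm (n * r) t, ← mul_assoc, htn]
      rw [hac] at h4
      exact MTL.le_zer_eq h4
    have h6 : r ≤ a := by
      rw [ha, MTL.neg_def]
      refine (MTL.le_himp_iff _ _ _).mpr ?_
      rw [mul_comm]
      exact le_of_eq h5
    have h7 : a ≤ x :=
      calc a = t * r := h1
        _ ≤ t * a := MTL.mul_le_mul_left' h6 t
        _ = a * t := mul_comm t a
        _ = x := hxat.symm
    exact absurd h7 (not_le_of_gt hxa)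

end BLHelpers

theorem stmt18 {A : Type*} [BLChain A] (o : A → A)
    (hc1 : ∀ x : A, min x (neg x) ≠ zer → o x = zer)
    (hc2 : o (zer : A) = 1 ∧ o (1 : A) = 1)
    (hc3 : ∀ x y : A, neg x = zer → x ≤ y → o x ≤ o y) :
    (∀ x : A, max (himp (neg (neg x)) x) (o x) = 1) ↔
    (∀ x : A, neg x = zer → o x = 1) := by
  constructor
  · intro h x hnx
    have hnn : neg (neg x) = 1 := by rw [hnx, MTL.neg_zer]
    have hx := h x
    rw [hnn, MTL.himp_one] at hx
    rcases max_choice x (o x) with hm | hm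
    · have hx1 : x = 1 := by rw [← hx, hm]
      rw [hx1]; exact hc2.2
    · rw [← hx, hm]
  · intro h x
    by_cases hnx : neg x = zer
    · have : o x = 1 := h x hnx
      rw [this]
      exact max_eq_right (MTLChain.le_one _)
    · by_cases hxz : x = zer
      · have : o x = 1 := by rw [hxz]; exact hc2.1
        rw [this]
        exact max_eq_right (MTLChain.le_one _)
      · have hle : neg (neg x) ≤ x := BL.negneg_le hxz hnx
        have h1 : himp (neg (neg x)) x = 1 := by
          apply le_antisymm (MTLChain.le_one _)
          refine (MTL.le_himp_iff _ _ _).mpr ?_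
          rwa [one_mul]
        rw [h1]
        exact max_eq_left (MTLChain.le_one _)
end

section
/- Let A be an MTL-chain, F = {x : a ≤ x} a lattice filter that is closed under & (with a idempotent), and suppose every element x < 1 of A has ¬x = 0 implies x = 1. It is not in general true that the quotient A/≡_F inherits this property: concretely, for the standard WNM-chain on [0,1] with negation n(x) = 1−x on [0,1/5]∪[4/5,1], n(x)=1/5 on [3/5,4/5], n(x)=4/5−x on [1/5,3/5], and filter F=[4/5,1], the chain A satisfies (¬x=0 → x=1) but the quotient A/≡_F does not. -/
open scoped Classical

/-- The weak negation of the WNM-chain of the counterexample: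
n(x) = 1-x on [0,1/5] ∪ [4/5,1], n(x) = 4/5 - x on [1/5,3/5],
n(x) = 1/5 on [3/5,4/5]. -/
noncomputable def n19 (x : ℝ) : ℝ :=
  if x ≤ 1/5 then 1 - x
  else if x < 3/5 then 4/5 - x
  else if x < 4/5 then 1/5
  else 1 - x

/-- The WNM monoid operation: x & y = 0 if x ≤ n(y), else min(x,y). -/
noncomputable def mul19 (x y : ℝ) : ℝ := if x ≤ n19 y then 0 else min x y

/-- The WNM residuum: x → y = 1 if x ≤ y, else max(n(x), y). -/
noncomputable def imp19 (x y : ℝ) : ℝ := if x ≤ y then 1 else max (n19 x) y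

/-- The filter F = [4/5, 1]. -/
def F19 : Set ℝ := Set.Icc (4/5) 1

/-- The congruence ≡_F: x ≡ y iff (x→y) ∧ (y→x) ∈ F. -/
noncomputable def equiv19 (x y : ℝ) : Prop := min (imp19 x y) (imp19 y x) ∈ F19

/-!
The negation `n19` vanishes only at `1`. In the quotient, take `x = 3/5`: its negation is
`n19 (3/5) = 1/5`, and `1/5 ≡ 0` because `1/5 → 0 = n19 (1/5) = 4/5 ∈ F`, so `[¬x] = [0]`.
Yet `x ≢ 1`, since `1 → 3/5 = max (n19 1) (3/5) = 3/5 ∉ F`.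
-/

lemma n19_eq_zero_iff {x : ℝ} : n19 x = 0 ↔ x = 1 := by
  constructor
  · intro h
    unfold n19 at h
    split_ifs at h <;> linarith
  · rintro rfl
    norm_num [n19]

lemma n19_one_fifth : n19 (1/5) = 4/5 := by norm_num [n19]

lemma n19_three_fifths : n19 (3/5) = 1/5 := by norm_num [n19]

lemma imp19_of_le {x y : ℝ} (h : x ≤ y) : imp19 x y = 1 := if_pos h

lemma imp19_of_lt {x y : ℝ} (h : y < x) : imp19 x y = max (n19 x) y := if_neg h.not_ge

lemma equiv19_one_fifth_zero : equiv19 (1/5) 0 := by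
  rw [equiv19, imp19_of_lt (by norm_num), imp19_of_le (by norm_num), n19_one_fifth]
  norm_num [F19]

lemma not_equiv19_three_fifths_one : ¬ equiv19 (3/5) 1 := by
  rw [equiv19, imp19_of_le (by norm_num), imp19_of_lt (by norm_num), n19_eq_zero_iff.mpr rfl]
  norm_num [F19]

/-- The chain A satisfies "¬x = 0 → x = 1", but the quotient A/≡_F does not:
there is an x with [x] ≠ [1] while [¬x] = [0]. -/
theorem stmt19 :
    (∀ x ∈ Set.Icc (0:ℝ) 1, n19 x = 0 → x = 1) ∧
    (∃ x ∈ Set.Icc (0:ℝ) 1, ¬ equiv19 x 1 ∧ equiv19 (imp19 x 0) 0) := by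
  refine ⟨fun x _ => n19_eq_zero_iff.mp, 3/5, by norm_num, not_equiv19_three_fifths_one, ?_⟩
  rw [imp19_of_lt (by norm_num), n19_three_fifths, max_eq_left (by norm_num)]
  exact equiv19_one_fifth_zero
end
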